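/- Let N ≥ 2 and let R be the N×N real matrix with R_{i,i} = -1/√2 and R_{i,i+1} = 1/√2 for 1 ≤ i ≤ N-1, R_{N,j} = 1/N for all j, and all other entries 0. Then R is invertible and its inverse is given by (R⁻¹)_{i,j} = -√2(N-j)/N if i ≤ j and j ≤ N-1; (R⁻¹)_{i,j} = √2 j/N if i > j and j ≤ N-1; and (R⁻¹)_{i,N} = 1 for all 1 ≤ i ≤ N. -/

import Mathlib

/-!
For `j < N - 1` the `j`-th column of `Rinv` is the step function `√2 (𝟙[k > j] - (N - j - 1) / N)`:
it jumps by `√2` exactly between rows `j` and `j + 1`, and its mean is `0`. The last column is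
constant `1`. The difference rows of `R` read off the jumps and its last row reads off the mean,
so `R * Rinv = 1`.
-/

open Matrix Real

noncomputable def diffMeanMatrix (N : ℕ) : Matrix (Fin N) (Fin N) ℝ :=
  of fun i j =>
    if (i : ℕ) = N - 1 then 1 / (N : ℝ)
    else if j = i then -(1 / √2)
    else if (j : ℕ) = (i : ℕ) + 1 then 1 / √2 else 0

noncomputable def diffMeanMatrixInv (N : ℕ) : Matrix (Fin N) (Fin N) ℝ :=
  of fun i j =>
    if (j : ℕ) = N - 1 then 1
    else if (i : ℕ) ≤ (j : ℕ) then -(√2 * ((N : ℝ) - ((j : ℕ) + 1)) / N)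
    else √2 * ((j : ℕ) + 1) / N

lemma diffMeanMatrix_mul_apply_of_lt {N : ℕ} (M : Matrix (Fin N) (Fin N) ℝ) {i : Fin N}
    (hi : (i : ℕ) + 1 < N) (j : Fin N) :
    (diffMeanMatrix N * M) i j = (M ⟨i + 1, hi⟩ j - M i j) / √2 := by
  have hne : i ≠ ⟨i + 1, hi⟩ := by simp [Fin.ext_iff]
  have hlast : (i : ℕ) ≠ N - 1 := by omega
  rw [mul_apply, Fintype.sum_eq_add i _ hne]
  · simp only [diffMeanMatrix, of_apply, hlast, hne.symm, ↓reduceIte]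
    ring
  · rintro k ⟨hki, hki'⟩
    simp_all [diffMeanMatrix, Fin.ext_iff]

lemma diffMeanMatrix_mul_apply_last {N : ℕ} (M : Matrix (Fin N) (Fin N) ℝ) {i : Fin N}
    (hi : (i : ℕ) = N - 1) (j : Fin N) :
    (diffMeanMatrix N * M) i j = (∑ k, M k j) / N := by
  simp [mul_apply, diffMeanMatrix, hi, Finset.mul_sum, div_eq_inv_mul]

lemma diffMeanMatrixInv_apply_of_ne {N : ℕ} (k : Fin N) {j : Fin N} (hj : (j : ℕ) ≠ N - 1) :
    diffMeanMatrixInv N k j = √2 * ((if j < k then 1 else 0) - ((N : ℝ) - ((j : ℕ) + 1)) / N) := by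
  have hN : (N : ℝ) ≠ 0 := by have := j.pos; positivity
  rw [diffMeanMatrixInv, of_apply, if_neg hj]
  split_ifs with hkj hjk hjk <;> rw [Fin.lt_def] at hjk
  · omega
  · ring
  · field_simp
    ring
  · omega

lemma sum_diffMeanMatrixInv_col {N : ℕ} (j : Fin N) :
    ∑ k, diffMeanMatrixInv N k j = if (j : ℕ) = N - 1 then (N : ℝ) else 0 := by
  split_ifs with hj
  · simp [diffMeanMatrixInv, hj]
  · have hjN : (j : ℕ) + 1 ≤ N := j.2
    have hN : (N : ℝ) ≠ 0 := by have := j.pos; positivity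
    simp_rw [diffMeanMatrixInv_apply_of_ne _ hj, ← Finset.mul_sum, Finset.sum_sub_distrib,
      Finset.sum_boole, Finset.filter_lt_eq_Ioi, Fin.card_Ioi, Finset.sum_const, Finset.card_univ,
      Fintype.card_fin, nsmul_eq_mul]
    rw [Nat.cast_sub (by omega : (j : ℕ) ≤ N - 1), Nat.cast_sub (by omega : 1 ≤ N)]
    field_simp
    ring

lemma diffMeanMatrixInv_succ_sub {N : ℕ} {i : Fin N} (hi : (i : ℕ) + 1 < N) (j : Fin N) :
    diffMeanMatrixInv N ⟨i + 1, hi⟩ j - diffMeanMatrixInv N i j = if i = j then √2 else 0 := by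
  by_cases hj : (j : ℕ) = N - 1
  · have : i ≠ j := by rw [Ne, Fin.ext_iff]; omega
    simp [diffMeanMatrixInv, hj, this]
  · rw [diffMeanMatrixInv_apply_of_ne _ hj, diffMeanMatrixInv_apply_of_ne _ hj]
    simp only [Fin.lt_def, Fin.ext_iff]
    split_ifs <;> first | omega | ring

lemma diffMeanMatrix_mul_inv (N : ℕ) : diffMeanMatrix N * diffMeanMatrixInv N = 1 := by
  ext i j
  rw [one_apply]
  by_cases hi : (i : ℕ) = N - 1
  · have hN : (N : ℝ) ≠ 0 := by have := i.pos; positivity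
    rw [diffMeanMatrix_mul_apply_last _ hi, sum_diffMeanMatrixInv_col]
    simp only [← hi, Fin.val_inj, eq_comm (a := j)]
    split_ifs <;> simp [hN]
  · rw [diffMeanMatrix_mul_apply_of_lt _ (by omega), diffMeanMatrixInv_succ_sub]
    split_ifs <;> simp

theorem stmt1_general (N : ℕ)
    (R Rinv : Matrix (Fin N) (Fin N) ℝ)
    (hR : ∀ i j : Fin N, R i j =
      if (i : ℕ) = N - 1 then 1 / (N : ℝ)
      else if j = i then -(1 / Real.sqrt 2)
      else if (j : ℕ) = (i : ℕ) + 1 then 1 / Real.sqrt 2 else 0)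
    (hRinv : ∀ i j : Fin N, Rinv i j =
      if (j : ℕ) = N - 1 then 1
      else if (i : ℕ) ≤ (j : ℕ) then
        -(Real.sqrt 2 * ((N : ℝ) - (((j : ℕ) : ℝ) + 1)) / (N : ℝ))
      else Real.sqrt 2 * (((j : ℕ) : ℝ) + 1) / (N : ℝ)) :
    IsUnit R ∧ R⁻¹ = Rinv := by
  obtain rfl : R = diffMeanMatrix N := Matrix.ext hR
  obtain rfl : Rinv = diffMeanMatrixInv N := Matrix.ext hRinv
  have h := diffMeanMatrix_mul_inv N
  exact ⟨IsUnit.of_mul_eq_one _ h, inv_eq_right_inv h⟩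

/-- The matrix `R` (rows `1 ≤ i ≤ N-1`: `-1/√2` at column `i`, `1/√2` at column `i+1`;
row `N`: all entries `1/N`) is invertible with the explicit inverse `Rinv`. -/
theorem stmt1 (N : ℕ) (hN : 2 ≤ N)
    (R Rinv : Matrix (Fin N) (Fin N) ℝ)
    (hR : ∀ i j : Fin N, R i j =
      if (i : ℕ) = N - 1 then 1 / (N : ℝ)
      else if j = i then -(1 / Real.sqrt 2)
      else if (j : ℕ) = (i : ℕ) + 1 then 1 / Real.sqrt 2 else 0)
    (hRinv : ∀ i j : Fin N, Rinv i j =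
      if (j : ℕ) = N - 1 then 1
      else if (i : ℕ) ≤ (j : ℕ) then
        -(Real.sqrt 2 * ((N : ℝ) - (((j : ℕ) : ℝ) + 1)) / (N : ℝ))
      else Real.sqrt 2 * (((j : ℕ) : ℝ) + 1) / (N : ℝ)) :
    IsUnit R ∧ R⁻¹ = Rinv :=
  stmt1_general N R Rinv hR hRinv
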